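/- Let (M,·,T_M) be a Rota-Baxter bimodule over a Rota-Baxter pre-Lie algebra (g,·,T) of weight λ, and ψ: g⊗g → M, χ: g → M linear. Define on g⊕M: (a,m)·_ψ(b,n) = (a·b, a·n + m·b + ψ(a⊗b)) and T_χ(a,m) = (T(a), χ(a) + T_M(m)). Then (g⊕M, ·_ψ, T_χ) is a Rota-Baxter pre-Lie algebra of weight λ if and only if (ψ,χ) satisfy: (i) a·ψ(b⊗c) - ψ(a·b⊗c) + ψ(a⊗b·c) - ψ(a⊗b)·c is symmetric in a,b, and (ii) T(a)·χ(b)+χ(a)·T(b)+ψ(T(a)⊗T(b)) = T_M(χ(a)·b + ψ(T(a)⊗b) + a·χ(b) + ψ(a⊗T(b)) + λψ(a⊗b)) + χ(T(a)·b + a·T(b) + λa·b). -/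
import Mathlib


/-- The product `(a,m)·_ψ(b,n) = (a·b, a·n + m·b + ψ(a⊗b))` on `g ⊕ M`. -/
def sdMul {k : Type*} [Field k] [CharZero k]
    {G M : Type*} [AddCommGroup G] [Module k G] [AddCommGroup M] [Module k M]
    (mulG : G →ₗ[k] G →ₗ[k] G)
    (S : G →ₗ[k] M →ₗ[k] M) (P : M →ₗ[k] G →ₗ[k] M)
    (psi : G →ₗ[k] G →ₗ[k] M) (x y : G × M) : G × M :=
  (mulG x.1 y.1, S x.1 y.2 + P x.2 y.1 + psi x.1 y.1)

/-- The operator `T_χ(a,m) = (T(a), χ(a) + T_M(m))` on `g ⊕ M`. -/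
def sdT {k : Type*} [Field k] [CharZero k]
    {G M : Type*} [AddCommGroup G] [Module k G] [AddCommGroup M] [Module k M]
    (T : G →ₗ[k] G) (TM : M →ₗ[k] M) (chi : G →ₗ[k] M) (x : G × M) : G × M :=
  (T x.1, chi x.1 + TM x.2)

/-- `(g⊕M, ·_ψ, T_χ)` is a Rota-Baxter pre-Lie algebra of weight λ iff `(ψ,χ)`
is a 2-cocycle. -/
theorem stmt14 {k : Type*} [Field k] [CharZero k]
    {G M : Type*} [AddCommGroup G] [Module k G] [AddCommGroup M] [Module k M]
    (lam : k) (mulG : G →ₗ[k] G →ₗ[k] G) (T : G →ₗ[k] G)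
    (S : G →ₗ[k] M →ₗ[k] M) (P : M →ₗ[k] G →ₗ[k] M) (TM : M →ₗ[k] M)
    (hpre : ∀ x y z : G, mulG (mulG x y) z - mulG x (mulG y z)
      = mulG (mulG y x) z - mulG y (mulG x z))
    (hRB : ∀ a b : G, mulG (T a) (T b)
      = T (mulG a (T b) + mulG (T a) b + lam • mulG a b))
    (hb1 : ∀ (a b : G) (m : M), S a (S b m) - S (mulG a b) m
      = S b (S a m) - S (mulG b a) m)
    (hb2 : ∀ (a b : G) (m : M), S a (P m b) - P (S a m) b
      = P m (mulG a b) - P (P m a) b)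
    (hTM1 : ∀ (a : G) (m : M), S (T a) (TM m)
      = TM (S a (TM m) + S (T a) m + lam • S a m))
    (hTM2 : ∀ (a : G) (m : M), P (TM m) (T a)
      = TM (P m (T a) + P (TM m) a + lam • P m a))
    (psi : G →ₗ[k] G →ₗ[k] M) (chi : G →ₗ[k] M) :
    ((∀ x y z : G × M,
        sdMul mulG S P psi (sdMul mulG S P psi x y) z
          - sdMul mulG S P psi x (sdMul mulG S P psi y z)
        = sdMul mulG S P psi (sdMul mulG S P psi y x) z
          - sdMul mulG S P psi y (sdMul mulG S P psi x z)) ∧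
     (∀ x y : G × M,
        sdMul mulG S P psi (sdT T TM chi x) (sdT T TM chi y)
        = sdT T TM chi (sdMul mulG S P psi x (sdT T TM chi y)
            + sdMul mulG S P psi (sdT T TM chi x) y
            + lam • sdMul mulG S P psi x y)))
    ↔
    ((∀ a b c : G,
        S a (psi b c) - psi (mulG a b) c + psi a (mulG b c) - P (psi a b) c
        = S b (psi a c) - psi (mulG b a) c + psi b (mulG a c) - P (psi b a) c) ∧
     (∀ a b : G,
        S (T a) (chi b) + P (chi a) (T b) + psi (T a) (T b)
        = TM (P (chi a) b + psi (T a) b + S a (chi b) + psi a (T b) + lam • psi a b)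
          + chi (mulG (T a) b + mulG a (T b) + lam • mulG a b))) := by
  constructor
  · rintro ⟨h1, h2⟩
    constructor
    · intro a b c
      have h := congrArg Prod.snd (h1 (a, 0) (b, 0) (c, 0))
      simp [sdMul, Prod.ext_iff] at h
      linear_combination (norm := abel1) -h
    · intro a b
      have h := congrArg Prod.snd (h2 (a, 0) (b, 0))
      simp [sdMul, sdT, Prod.ext_iff] at h
      rw [h]
      simp only [map_add, map_smul]
      abel
  · rintro ⟨c1, c2⟩
    constructor
    · rintro ⟨a, m⟩ ⟨b, n⟩ ⟨c, p⟩
      have e1 := hb1 a b p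
      have e2 := hb2 a c n
      have e3 := hb2 b c m
      have e4 := c1 a b c
      simp only [sdMul, Prod.ext_iff, Prod.mk_sub_mk, Prod.fst, Prod.snd, LinearMap.add_apply, LinearMap.smul_apply, map_add, map_smul]
      refine ⟨hpre a b c, ?_⟩
      linear_combination (norm := abel1) -e1 - e2 + e3 - e4
    · rintro ⟨a, m⟩ ⟨b, n⟩
      have e1 := hTM1 a n
      have e2 := hTM2 b m
      have e3 := c2 a b
      have e4 := hRB a b
      simp only [map_add, map_smul] at e1 e2 e3 e4
      simp only [sdMul, sdT, Prod.ext_iff, Prod.mk_add_mk, Prod.smul_mk, Prod.fst, Prod.snd, LinearMap.add_apply, LinearMap.smul_apply, map_add, map_smul]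
      constructor
      · linear_combination (norm := abel1) e4
      · simp only [smul_add]
        linear_combination (norm := abel1) e1 + e2 + e3
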